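/- The 5×5 parameter-free Bose-Hubbard metric Θ^(5)(γ) is positive definite for all γ in the open interval (0, γ_max) where γ_max = (1/2)√(√5 - 1). -/

import Mathlib

open Complex Matrix ComplexOrder

noncomputable def Theta5 (γ : ℝ) : Matrix (Fin 5) (Fin 5) ℂ :=
  !![1, 2 * I * γ, 0, 4 * I * γ ^ 3, 0;
     -(2 * I * γ), ((1 + 6 * γ ^ 2 : ℝ) : ℂ), I * Real.sqrt 6 * γ * (1 + 2 * (γ : ℂ) ^ 2),
       ((4 * γ ^ 4 : ℝ) : ℂ), 4 * I * γ ^ 3;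
     0, -(I * Real.sqrt 6 * γ * (1 + 2 * (γ : ℂ) ^ 2)), ((1 + 8 * γ ^ 2 + 8 * γ ^ 4 : ℝ) : ℂ),
       I * Real.sqrt 6 * γ * (1 + 2 * (γ : ℂ) ^ 2), 0;
     -(4 * I * γ ^ 3), ((4 * γ ^ 4 : ℝ) : ℂ), -(I * Real.sqrt 6 * γ * (1 + 2 * (γ : ℂ) ^ 2)),
       ((1 + 6 * γ ^ 2 : ℝ) : ℂ), 2 * I * γ;
     0, -(4 * I * γ ^ 3), 0, -(2 * I * γ), 1]

/-!
Gaussian elimination, with denominators cleared, gives a congruence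
`c • Θ = B * D * Bᴴ` with `c = (1 + 2γ²)(1 + 2γ² - 4γ⁴)`, `B` lower triangular of determinant `-c`
and `D` diagonal. The entries of `D` are products of `1 + 2γ²`, `1 + 4γ²`, `1 - 8γ⁴ + 32γ⁶`
(positive for every real `γ`), `1 + 2γ² - 4γ⁴` and `1 - 2γ² - 4γ⁴`. Everything hinges on the last
factor, which is positive exactly when `γ² < (√5 - 1) / 4`, i.e. `|γ| < γ_max`.
-/

theorem Matrix.PosDef.of_smul_eq_mul_mul_conjTranspose {𝕜 : Type*} [RCLike 𝕜] {n : Type*}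
    [Fintype n] [DecidableEq n] {A B D : Matrix n n 𝕜} {c : ℝ} (hc : 0 < c) (hD : D.PosDef)
    (hB : IsUnit B.det) (h : c • A = B * D * Bᴴ) : A.PosDef := by
  have := (hD.mul_mul_conjTranspose_same
    (vecMul_injective_iff_isUnit.2 ((isUnit_iff_isUnit_det B).2 hB))).smul (inv_pos.2 hc)
  rwa [← h, inv_smul_smul₀ hc.ne'] at this

theorem Matrix.mul_diagonal_mul_conjTranspose_apply {n α : Type*} [Fintype n] [DecidableEq n]
    [CommSemiring α] [StarRing α] (B : Matrix n n α) (d : n → α) (i j : n) :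
    (B * diagonal d * Bᴴ) i j = ∑ k, B i k * d k * star (B j k) := by
  rw [mul_apply]; simp only [mul_diagonal, conjTranspose_apply]

noncomputable def theta5Scale (γ : ℝ) : ℝ := (1 + 2 * γ ^ 2) * (1 + 2 * γ ^ 2 - 4 * γ ^ 4)

noncomputable def theta5Lower (γ : ℝ) : Matrix (Fin 5) (Fin 5) ℂ :=
  !![1, 0, 0, 0, 0;
     -(2 * I * γ), -(I * (1 + 2 * (γ : ℂ) ^ 2)), 0, 0, 0;
     0, -(Real.sqrt 6 * γ * (1 + 2 * (γ : ℂ) ^ 2)), -(1 + 2 * (γ : ℂ) ^ 2 - 4 * (γ : ℂ) ^ 4), 0, 0;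
     -(4 * I * γ ^ 3), 4 * I * γ ^ 4,
       I * Real.sqrt 6 * γ * (1 + 2 * (γ : ℂ) ^ 2 - 4 * (γ : ℂ) ^ 4), I, 0;
     0, -(4 * (γ : ℂ) ^ 3), 4 * Real.sqrt 6 * (γ : ℂ) ^ 4, 2 * γ, 1]

noncomputable def theta5Pivots (γ : ℝ) : Fin 5 → ℝ :=
  ![theta5Scale γ,
    1 + 2 * γ ^ 2 - 4 * γ ^ 4,
    1 + 2 * γ ^ 2,
    (1 + 2 * γ ^ 2 - 4 * γ ^ 4) * ((1 + 4 * γ ^ 2) * (1 - 2 * γ ^ 2 - 4 * γ ^ 4)),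
    (1 + 2 * γ ^ 2) * ((1 - 2 * γ ^ 2 - 4 * γ ^ 4) * (1 - 8 * γ ^ 4 + 32 * γ ^ 6))]

theorem theta5Scale_smul_theta5 (γ : ℝ) :
    theta5Scale γ • Theta5 γ =
      theta5Lower γ * diagonal (fun k => (theta5Pivots γ k : ℂ)) * (theta5Lower γ)ᴴ := by
  have hs : ((Real.sqrt 6 : ℝ) : ℂ) ^ 2 = 6 := by
    rw [← ofReal_pow, Real.sq_sqrt (by norm_num)]; norm_num
  ext i j
  rw [Matrix.smul_apply, mul_diagonal_mul_conjTranspose_apply, Fin.sum_univ_five]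
  fin_cases i <;> fin_cases j <;>
    simp only [Theta5, theta5Lower, theta5Pivots, theta5Scale, of_apply, cons_val', cons_val,
      cons_val_zero, cons_val_one, cons_val_fin_one, Fin.isValue, Fin.zero_eta, Fin.mk_one,
      Fin.reduceFinMk, real_smul, RCLike.star_def, map_add, map_sub, map_neg, map_mul, map_pow,
      map_ofNat, map_one, map_zero, conj_I, conj_ofReal] <;>
    push_cast <;> ring_nf <;> simp only [hs, I_sq] <;> ring

theorem det_theta5Lower (γ : ℝ) : (theta5Lower γ).det = -theta5Scale γ := by
  have hlower : (theta5Lower γ).IsLowerTriangular := by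
    intro i j hij
    rw [OrderDual.toDual_lt_toDual] at hij
    fin_cases i <;> fin_cases j <;> simp_all [theta5Lower]
  rw [det_of_isLowerTriangular _ hlower, Fin.prod_univ_five]
  simp only [theta5Lower, theta5Scale, of_apply, cons_val', cons_val, cons_val_zero, cons_val_one,
    cons_val_fin_one, Fin.isValue]
  push_cast
  linear_combination (1 + 2 * (γ : ℂ) ^ 2) * (1 + 2 * (γ : ℂ) ^ 2 - 4 * (γ : ℂ) ^ 4) * I_sq

theorem two_mul_sq_add_four_mul_pow_four_lt_one {γ : ℝ} (h0 : 0 < γ)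
    (h : γ < 1 / 2 * √(√5 - 1)) : 2 * γ ^ 2 + 4 * γ ^ 4 < 1 := by
  have h5 : √5 ^ 2 = 5 := Real.sq_sqrt (by norm_num)
  have hsq : γ ^ 2 < (√5 - 1) / 4 := by
    calc γ ^ 2 < (1 / 2 * √(√5 - 1)) ^ 2 := pow_lt_pow_left₀ h h0.le two_ne_zero
      _ = (√5 - 1) / 4 := by
        rw [mul_pow, Real.sq_sqrt (by nlinarith [Real.sqrt_nonneg 5])]; ring
  nlinarith [Real.sqrt_nonneg 5, sq_nonneg γ]

theorem theta5Pivots_pos {γ : ℝ} (h : 2 * γ ^ 2 + 4 * γ ^ 4 < 1) (k : Fin 5) :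
    0 < theta5Pivots γ k := by
  have hp : 0 < 1 + 2 * γ ^ 2 := by positivity
  have hp' : 0 < 1 + 4 * γ ^ 2 := by positivity
  have hq : 0 < 1 + 2 * γ ^ 2 - 4 * γ ^ 4 := by nlinarith [sq_nonneg γ]
  have hr : 0 < 1 - 2 * γ ^ 2 - 4 * γ ^ 4 := by linarith
  have hs : 0 < 1 - 8 * γ ^ 4 + 32 * γ ^ 6 := by
    have : 1 - 8 * γ ^ 4 + 32 * γ ^ 6 = 32 * (γ ^ 2 - 1 / 6) ^ 2 * (γ ^ 2 + 1 / 12) + 25 / 27 := by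
      ring
    rw [this]; positivity
  fin_cases k <;> simp [theta5Pivots, theta5Scale, *]

theorem stmt17 (γ : ℝ) (h1 : 0 < γ) (h2 : γ < 1 / 2 * Real.sqrt (Real.sqrt 5 - 1)) :
    (Theta5 γ).PosDef := by
  have hγ := two_mul_sq_add_four_mul_pow_four_lt_one h1 h2
  refine PosDef.of_smul_eq_mul_mul_conjTranspose (theta5Pivots_pos hγ 0)
    (posDef_diagonal_iff.2 fun k => ?_) ?_ (theta5Scale_smul_theta5 γ)
  · exact_mod_cast theta5Pivots_pos hγ k
  · rw [det_theta5Lower, isUnit_iff_ne_zero, neg_ne_zero, ofReal_ne_zero]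
    exact (theta5Pivots_pos hγ 0).ne'
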